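/- arXiv:1301.1018 — 3 statements merged into one kernel-verified Lean document; each statement's English description precedes it below -/
import Mathlib

section
/- The two vectors u = (1, 0, -2, 0, -2) and v = (1-√3, 0, 1, 0, 1+√3) in ℝ⁵ have the same autocorrelation sequence g_m = ∑_i x_i x_{i+m} for all m, namely (-2, 0, 2, 0, 9, 0, 2, 0, -2) for m = -4,...,4, yet u is not equal to ±v, to any circular/index shift of ±v, or to the reversal of ±v. -/
/-!
A vector `x` supported on the indices `1, 3, 5` with entries `a, b, c` has autocorrelation
`a² + b² + c²` at lag `0`, `ab + bc` at lags `±2`, `ac` at lags `±4` and `0` elsewhere. For `u` and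
`v` these three numbers are `9, 2, -2` (for `v` because `(1 - √3)(1 + √3) = -2`).
Since `|u 3| = 2` while no entry of `v` has absolute value `2`, no signed reindexing of `v`,
in particular no shift or reversal of `±v`, equals `u`.
-/

open Finset

def vec135 {R : Type*} [Zero R] (a b c : R) : ℤ → R :=
  fun i => if i = 1 then a else if i = 3 then b else if i = 5 then c else 0

lemma vec135_eq_zero {R : Type*} [Zero R] (a b c : R) {i : ℤ} (h : i < 1 ∨ 5 < i) :
    vec135 a b c i = 0 := by
  simp only [vec135]
  rw [if_neg (by omega), if_neg (by omega), if_neg (by omega)]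

lemma sum_Icc_vec135_mul_vec135 {R : Type*} [CommRing R] (a b c : R) (m : ℤ) :
    ∑ i ∈ Icc (1 : ℤ) 5, vec135 a b c i * vec135 a b c (i + m) =
      if m = 0 then a ^ 2 + b ^ 2 + c ^ 2 else if m = 2 ∨ m = -2 then a * b + b * c
      else if m = 4 ∨ m = -4 then a * c else 0 := by
  by_cases hm : -4 ≤ m ∧ m ≤ 4
  · obtain ⟨hm₁, hm₂⟩ := hm
    rw [show Icc (1 : ℤ) 5 = {1, 2, 3, 4, 5} by decide]
    interval_cases m <;> simp [vec135] <;> ring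
  · rw [if_neg (by omega), if_neg (by omega), if_neg (by omega)]
    refine sum_eq_zero fun i hi => ?_
    rw [mem_Icc] at hi
    rw [vec135_eq_zero a b c (i := i + m) (by omega), mul_zero]

lemma abs_vec135_ne {R : Type*} [AddGroup R] [Lattice R] [AddLeftMono R] {a b c t : R}
    (ht : t ≠ 0) (ha : |a| ≠ t) (hb : |b| ≠ t) (hc : |c| ≠ t) (j : ℤ) : |vec135 a b c j| ≠ t := by
  unfold vec135
  split_ifs <;> simp_all [ht.symm]

lemma ne_mul_comp_of_abs_ne {R ι κ : Type*} [Ring R] [LinearOrder R] [IsOrderedRing R]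
    {x : ι → R} {y : κ → R} {i : ι} (hy : ∀ j, |y j| ≠ |x i|) {ε : R}
    (hε : ε = 1 ∨ ε = -1) (σ : ι → κ) : x ≠ fun j => ε * y (σ j) := by
  intro h
  have hε₁ : |ε| = 1 := by rcases hε with rfl | rfl <;> simp
  exact hy (σ i) (by rw [congrFun h i, abs_mul, hε₁, one_mul])

/-- The two vectors u = (1,0,-2,0,-2) and v = (1-√3,0,1,0,1+√3) (supported on indices
1,…,5 of ℤ, zero elsewhere) have the same autocorrelation sequence
g_m = ∑_i x_i x_{i+m}, namely (-2,0,2,0,9,0,2,0,-2) for m = -4,…,4, yet u is not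
equal to ±v, to any (circular/index) shift of ±v, or to the reversal of ±v. -/
theorem stmt0
    (u v : ℤ → ℝ)
    (hu : u = fun i => if i = 1 then 1 else if i = 3 then -2 else if i = 5 then -2 else 0)
    (hv : v = fun i => if i = 1 then 1 - Real.sqrt 3 else if i = 3 then 1
      else if i = 5 then 1 + Real.sqrt 3 else 0)
    (g : (ℤ → ℝ) → ℤ → ℝ)
    (hg : ∀ x m, g x m = ∑ i ∈ Finset.Icc (1 : ℤ) 5, x i * x (i + m)) :
    (∀ m : ℤ, g u m = g v m) ∧
    (∀ m : ℤ, g u m =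
      if m = 0 then 9 else if m = 2 ∨ m = -2 then 2 else if m = 4 ∨ m = -4 then -2 else 0) ∧
    (∀ (k : ℤ) (ε : ℝ), (ε = 1 ∨ ε = -1) →
      u ≠ (fun i => ε * v (i + k)) ∧ u ≠ (fun i => ε * v (k - i))) := by
  replace hu : u = vec135 1 (-2) (-2) := hu
  replace hv : v = vec135 (1 - √3) 1 (1 + √3) := hv
  have hsqrt : √3 ^ 2 = 3 := Real.sq_sqrt (by norm_num)
  have hgu : ∀ m : ℤ, g u m =
      if m = 0 then 9 else if m = 2 ∨ m = -2 then 2 else if m = 4 ∨ m = -4 then -2 else 0 := by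
    intro m
    rw [hg, hu, sum_Icc_vec135_mul_vec135]
    norm_num
  have hgv : ∀ m : ℤ, g v m = g u m := by
    intro m
    rw [hgu, hg, hv, sum_Icc_vec135_mul_vec135,
      show (1 - √3) ^ 2 + 1 ^ 2 + (1 + √3) ^ 2 = (9 : ℝ) by linear_combination 2 * hsqrt,
      show (1 - √3) * 1 + 1 * (1 + √3) = (2 : ℝ) by ring,
      show (1 - √3) * (1 + √3) = (-2 : ℝ) by linear_combination -hsqrt]
  have hv_abs : ∀ j, |v j| ≠ |u 3| := by
    have h₁ : 1 < √3 := by nlinarith [Real.sqrt_nonneg 3]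
    have h₂ : √3 < 2 := by nlinarith [Real.sqrt_nonneg 3]
    rw [show |u 3| = 2 by norm_num [hu, vec135], hv]
    refine abs_vec135_ne two_ne_zero ?_ (by norm_num) ?_
    · rw [abs_of_neg (by linarith)]; linarith
    · rw [abs_of_pos (by linarith)]; linarith
  exact ⟨fun m => (hgv m).symm, hgu, fun k ε hε =>
    ⟨ne_mul_comp_of_abs_ne hv_abs hε (· + k), ne_mul_comp_of_abs_ne hv_abs hε (k - ·)⟩⟩
end

section
/- Let B_i ∈ ℝ^{s×s}, i = 1,...,N, be symmetric matrices with ∑_{i=1}^N B_i positive definite, and let y_i ≥ 0. Define g(z) = ∑_{i=1}^N (zᵀB_i z - y_i)². Then for any z₀, the sublevel set {z : g(z) ≤ g(z₀)} is bounded; in particular ‖z‖² ≤ (√(N g(z₀)) + ∑_i y_i) / λ_min(∑_i B_i) for all z in the sublevel set. -/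
/-!
With `c = λ_min(∑ Bᵢ) > 0`, the Rayleigh bound gives `c ‖z‖² ≤ zᵀ(∑ Bᵢ)z = ∑ zᵀBᵢz`, and each
`zᵀBᵢz ≤ |zᵀBᵢz - yᵢ| + yᵢ`. By Cauchy–Schwarz the residuals satisfy
`∑ |zᵀBᵢz - yᵢ| ≤ √(N g(z)) ≤ √(N g(z₀))` on the sublevel set, which yields the explicit bound
and hence boundedness.
-/

open Finset Matrix

lemma Matrix.IsHermitian.iInf_eigenvalues_mul_dotProduct_self_le {n : Type*} [Fintype n]
    [DecidableEq n] {A : Matrix n n ℝ} (hA : A.IsHermitian) (z : n → ℝ) :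
    (⨅ j, hA.eigenvalues j) * (z ⬝ᵥ z) ≤ z ⬝ᵥ A *ᵥ z := by
  set c := ⨅ j, hA.eigenvalues j
  have hpsd : (A - algebraMap ℝ _ c).PosSemidef := by
    rw [posSemidef_iff_isHermitian_and_spectrum_nonneg]
    refine ⟨hA.sub (isHermitian_diagonal _), ?_⟩
    rw [← spectrum.sub_singleton_eq, hA.spectrum_real_eq_range_eigenvalues]
    rintro _ ⟨_, ⟨j, rfl⟩, b, hb, rfl⟩
    rw [Set.mem_singleton_iff.mp hb]
    exact sub_nonneg.2 (ciInf_le (Set.finite_range hA.eigenvalues).bddBelow j)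
  simpa [sub_mulVec, Algebra.algebraMap_eq_smul_one, smul_mulVec] using
    hpsd.dotProduct_mulVec_nonneg z

lemma Matrix.PosDef.iInf_eigenvalues_pos {n : Type*} [Fintype n] [DecidableEq n] [Nonempty n]
    {A : Matrix n n ℝ} (hA : A.PosDef) : 0 < ⨅ j, hA.isHermitian.eigenvalues j := by
  obtain ⟨j, hj⟩ := exists_eq_ciInf_of_finite (f := hA.isHermitian.eigenvalues)
  exact hj ▸ hA.eigenvalues_pos j

lemma Finset.sum_abs_le_sqrt_card_mul_sum_sq {ι : Type*} (s : Finset ι) (f : ι → ℝ) :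
    ∑ i ∈ s, |f i| ≤ √(#s * ∑ i ∈ s, f i ^ 2) :=
  Real.le_sqrt_of_sq_le <| by simpa [sq_abs] using sq_sum_le_card_mul_sum_sq (f := fun i ↦ |f i|)

lemma isBounded_setOf_sum_sq_le {ι : Type*} [Fintype ι] (R : ℝ) :
    Bornology.IsBounded {z : ι → ℝ | ∑ i, z i ^ 2 ≤ R} := by
  refine (Metric.isBounded_closedBall (x := 0) (r := √R)).subset fun z hz ↦ ?_
  rw [Metric.mem_closedBall, dist_zero_right, pi_norm_le_iff_of_nonneg (Real.sqrt_nonneg R)]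
  exact fun i ↦ Real.abs_le_sqrt <|
    (single_le_sum (fun j _ ↦ sq_nonneg (z j)) (mem_univ i)).trans hz

lemma iInf_eigenvalues_mul_dotProduct_self_le_sqrt_residual {ι n : Type*} [Fintype ι]
    [Fintype n] [DecidableEq n] (B : ι → Matrix n n ℝ) (hB : (∑ i, B i).IsHermitian)
    (y : ι → ℝ) (z : n → ℝ) :
    (⨅ j, hB.eigenvalues j) * (z ⬝ᵥ z) ≤
      √(Fintype.card ι * ∑ i, (z ⬝ᵥ B i *ᵥ z - y i) ^ 2) + ∑ i, y i :=
  calc (⨅ j, hB.eigenvalues j) * (z ⬝ᵥ z)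
      ≤ z ⬝ᵥ (∑ i, B i) *ᵥ z := hB.iInf_eigenvalues_mul_dotProduct_self_le z
    _ = ∑ i, (z ⬝ᵥ B i *ᵥ z - y i) + ∑ i, y i := by
      rw [sum_mulVec, dotProduct_sum, ← sum_add_distrib]
      simp
    _ ≤ ∑ i, |z ⬝ᵥ B i *ᵥ z - y i| + ∑ i, y i := by
      gcongr with i
      exact le_abs_self _
    _ ≤ √(Fintype.card ι * ∑ i, (z ⬝ᵥ B i *ᵥ z - y i) ^ 2) + ∑ i, y i := by
      gcongr
      exact sum_abs_le_sqrt_card_mul_sum_sq univ _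

theorem stmt6_general (N s : ℕ) (hs : 0 < s)
    (B : Fin N → Matrix (Fin s) (Fin s) ℝ)
    (y : Fin N → ℝ)
    (hPD : (∑ i, B i).PosDef)
    (g : (Fin s → ℝ) → ℝ)
    (hg : ∀ z, g z = ∑ i, (z ⬝ᵥ (B i).mulVec z - y i) ^ 2)
    (z₀ : Fin s → ℝ) :
    Bornology.IsBounded {z : Fin s → ℝ | g z ≤ g z₀} ∧
    ∀ z ∈ {z : Fin s → ℝ | g z ≤ g z₀},
      haveI : Fact (0 < s) := ⟨hs⟩
      ∑ i, (z i) ^ 2 ≤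
        (Real.sqrt ((N : ℝ) * g z₀) + ∑ i, y i) / (⨅ j, hPD.isHermitian.eigenvalues j) := by
  have : NeZero s := ⟨hs.ne'⟩
  have hc := hPD.iInf_eigenvalues_pos
  have bound : ∀ z ∈ {z : Fin s → ℝ | g z ≤ g z₀},
      ∑ i, z i ^ 2 ≤ (√(N * g z₀) + ∑ i, y i) / ⨅ j, hPD.isHermitian.eigenvalues j := by
    intro z hz
    rw [le_div_iff₀ hc, mul_comm]
    calc (⨅ j, hPD.isHermitian.eigenvalues j) * ∑ i, z i ^ 2
        ≤ √(N * g z) + ∑ i, y i := by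
          simpa [hg, dotProduct, sq] using
            iInf_eigenvalues_mul_dotProduct_self_le_sqrt_residual B hPD.isHermitian y z
      _ ≤ √(N * g z₀) + ∑ i, y i := by
          gcongr
          exact hz
  exact ⟨(isBounded_setOf_sum_sq_le _).subset bound, bound⟩

/-- Let B_i ∈ ℝ^{s×s} be symmetric with ∑ B_i positive definite and y_i ≥ 0.
For g(z) = ∑_i (zᵀB_i z - y_i)², the sublevel set {z : g(z) ≤ g(z₀)} is bounded;
in particular ‖z‖² ≤ (√(N g(z₀)) + ∑_i y_i) / λ_min(∑_i B_i) on the sublevel set. -/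
theorem stmt6 (N s : ℕ) (hs : 0 < s)
    (B : Fin N → Matrix (Fin s) (Fin s) ℝ) (hB : ∀ i, (B i).IsSymm)
    (y : Fin N → ℝ) (hy : ∀ i, 0 ≤ y i)
    (hPD : (∑ i, B i).PosDef)
    (g : (Fin s → ℝ) → ℝ)
    (hg : ∀ z, g z = ∑ i, (z ⬝ᵥ (B i).mulVec z - y i) ^ 2)
    (z₀ : Fin s → ℝ) :
    Bornology.IsBounded {z : Fin s → ℝ | g z ≤ g z₀} ∧
    ∀ z ∈ {z : Fin s → ℝ | g z ≤ g z₀},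
      haveI : Fact (0 < s) := ⟨hs⟩
      ∑ i, (z i) ^ 2 ≤
        (Real.sqrt ((N : ℝ) * g z₀) + ∑ i, y i) / (⨅ j, hPD.isHermitian.eigenvalues j) :=
  stmt6_general N s hs B y hPD g hg z₀
end

section
/- Suppose g : ℝˢ → ℝ is differentiable with ∇g Lipschitz continuous with constant M on a convex set containing the segment [z - t·d, z] for all t ∈ [0, t̄], and d satisfies ‖d‖² ≤ (1/(2λ̲)) ∇g(z)ᵀd with ∇g(z)ᵀd ≥ 0. Then for every t with 0 ≤ t ≤ min{t̄, 2λ̲/M}: g(z) - g(z - t·d) ≥ (t/2) ∇g(z)ᵀ d. -/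
/-!
Restricted to the segment from `z` to `z - t • d`, the descent lemma gives
`g z - g (z - t • d) ≥ t ⟪∇g z, d⟫ - (M/2) t² ‖d‖²`. The curvature term is at most half the
linear one, because `M t ≤ 2λ` and `2λ ‖d‖² ≤ ⟪∇g z, d⟫`.
-/

open scoped RealInnerProductSpace

section Descent

variable {F : Type*} [NormedAddCommGroup F] [InnerProductSpace ℝ F] [CompleteSpace F]
  {g : F → ℝ} {G : F → F} {U : Set F} {M : ℝ}

theorem HasGradientAt.hasDerivAt_comp_add_smul {g' x v : F} {τ : ℝ}
    (hg : HasGradientAt g g' (x + τ • v)) :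
    HasDerivAt (fun σ : ℝ => g (x + σ • v)) ⟪g', v⟫ τ := by
  have hline : HasDerivAt (fun σ : ℝ => x + σ • v) v τ := by
    simpa using ((hasDerivAt_id τ).smul_const v).const_add x
  have := hg.hasFDerivAt.comp_hasDerivAt τ hline
  rwa [InnerProductSpace.toDual_apply_apply] at this

theorem Convex.descent_lemma (hU : Convex ℝ U) (hg : ∀ u ∈ U, HasGradientAt g (G u) u)
    (hG : ∀ u ∈ U, ∀ w ∈ U, ‖G u - G w‖ ≤ M * ‖u - w‖) {x y : F} (hx : x ∈ U) (hy : y ∈ U) :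
    g y ≤ g x + ⟪G x, y - x⟫ + M / 2 * ‖y - x‖ ^ 2 := by
  set v := y - x
  have hmem : ∀ τ ∈ Set.Icc (0 : ℝ) 1, x + τ • v ∈ U := fun τ hτ => hU.add_smul_sub_mem hx hy hτ
  set φ : ℝ → ℝ := fun τ => g (x + τ • v) - τ * ⟪G x, v⟫ - M / 2 * τ ^ 2 * ‖v‖ ^ 2
  set φ' : ℝ → ℝ := fun τ => ⟪G (x + τ • v), v⟫ - ⟪G x, v⟫ - M * τ * ‖v‖ ^ 2
  have hφ : ∀ τ ∈ Set.Icc (0 : ℝ) 1, HasDerivAt φ (φ' τ) τ := by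
    intro τ hτ
    have hquad : HasDerivAt (fun σ : ℝ => M / 2 * σ ^ 2 * ‖v‖ ^ 2) (M * τ * ‖v‖ ^ 2) τ :=
      (((hasDerivAt_pow 2 τ).const_mul (M / 2)).mul_const (‖v‖ ^ 2)).congr_deriv
        (by push_cast; ring)
    have := (((hg _ (hmem τ hτ)).hasDerivAt_comp_add_smul).sub
      ((hasDerivAt_id τ).mul_const ⟪G x, v⟫)).sub hquad
    exact this.congr_deriv (by ring)
  have hφ'_nonpos : ∀ τ ∈ Set.Icc (0 : ℝ) 1, φ' τ ≤ 0 := by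
    intro τ hτ
    have hLip : ‖G (x + τ • v) - G x‖ ≤ M * (τ * ‖v‖) := by
      simpa [norm_smul, abs_of_nonneg hτ.1] using hG _ (hmem τ hτ) x hx
    calc φ' τ = ⟪G (x + τ • v) - G x, v⟫ - M * τ * ‖v‖ ^ 2 := by simp only [φ', inner_sub_left]
      _ ≤ ‖G (x + τ • v) - G x‖ * ‖v‖ - M * τ * ‖v‖ ^ 2 := by
          gcongr; exact real_inner_le_norm _ _
      _ ≤ M * (τ * ‖v‖) * ‖v‖ - M * τ * ‖v‖ ^ 2 := by gcongr
      _ = 0 := by ring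
  have hanti : AntitoneOn φ (Set.Icc 0 1) :=
    antitoneOn_of_hasDerivWithinAt_nonpos (convex_Icc 0 1)
      (fun τ hτ => (hφ τ hτ).continuousAt.continuousWithinAt)
      (fun τ hτ => (hφ τ (interior_subset hτ)).hasDerivWithinAt)
      (fun τ hτ => hφ'_nonpos τ (interior_subset hτ))
  have h01 := hanti (Set.left_mem_Icc.2 zero_le_one) (Set.right_mem_Icc.2 zero_le_one) zero_le_one
  simp only [φ, v, one_smul, add_sub_cancel, zero_smul, add_zero] at h01
  linarith

end Descent

theorem stmt10_general (s : ℕ)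
    (g : EuclideanSpace ℝ (Fin s) → ℝ)
    (G : EuclideanSpace ℝ (Fin s) → EuclideanSpace ℝ (Fin s))
    (U : Set (EuclideanSpace ℝ (Fin s))) (hU : Convex ℝ U)
    (hGrad : ∀ u ∈ U, HasGradientAt g (G u) u)
    (M : ℝ) (hM : 0 < M)
    (hLip : ∀ u ∈ U, ∀ w ∈ U, ‖G u - G w‖ ≤ M * ‖u - w‖)
    (lam : ℝ) (hlam : 0 < lam)
    (z d : EuclideanSpace ℝ (Fin s))
    (tbar : ℝ)
    (hseg : ∀ t ∈ Set.Icc (0 : ℝ) tbar, z - t • d ∈ U)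
    (hd : ‖d‖ ^ 2 ≤ (1 / (2 * lam)) * inner ℝ (G z) d) :
    ∀ t : ℝ, 0 ≤ t → t ≤ min tbar (2 * lam / M) →
      g z - g (z - t • d) ≥ (t / 2) * inner ℝ (G z) d := by
  intro t ht htmin
  have htbar : t ≤ tbar := htmin.trans (min_le_left _ _)
  have hz : z ∈ U := by simpa using hseg 0 ⟨le_rfl, ht.trans htbar⟩
  have hdescent := hU.descent_lemma hGrad hLip hz (hseg t ⟨ht, htbar⟩)
  rw [sub_sub_cancel_left, inner_neg_right, real_inner_smul_right, norm_neg, norm_smul,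
    Real.norm_of_nonneg ht] at hdescent
  have hMt : M * t ≤ 2 * lam := (le_div_iff₀' hM).1 (htmin.trans (min_le_right _ _))
  have hcurv : M * t * ‖d‖ ^ 2 ≤ ⟪G z, d⟫ := by
    calc M * t * ‖d‖ ^ 2 ≤ 2 * lam * ‖d‖ ^ 2 := by gcongr
      _ ≤ ⟪G z, d⟫ := by rwa [← le_div_iff₀' (by positivity), div_eq_inv_mul, ← one_div]
  nlinarith [mul_le_mul_of_nonneg_left hcurv ht]

/-- If ∇g is M-Lipschitz on a convex set containing the segment [z - t̄·d, z], and d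
satisfies ‖d‖² ≤ (1/(2λ̲))∇g(z)ᵀd with ∇g(z)ᵀd ≥ 0, then for every
0 ≤ t ≤ min{t̄, 2λ̲/M}: g(z) - g(z - t·d) ≥ (t/2)·∇g(z)ᵀd. -/
theorem stmt10 (s : ℕ)
    (g : EuclideanSpace ℝ (Fin s) → ℝ)
    (G : EuclideanSpace ℝ (Fin s) → EuclideanSpace ℝ (Fin s))
    (U : Set (EuclideanSpace ℝ (Fin s))) (hU : Convex ℝ U)
    (hGrad : ∀ u ∈ U, HasGradientAt g (G u) u)
    (M : ℝ) (hM : 0 < M)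
    (hLip : ∀ u ∈ U, ∀ w ∈ U, ‖G u - G w‖ ≤ M * ‖u - w‖)
    (lam : ℝ) (hlam : 0 < lam)
    (z d : EuclideanSpace ℝ (Fin s))
    (tbar : ℝ) (htbar : 0 ≤ tbar)
    (hseg : ∀ t ∈ Set.Icc (0 : ℝ) tbar, z - t • d ∈ U)
    (hd : ‖d‖ ^ 2 ≤ (1 / (2 * lam)) * inner ℝ (G z) d)
    (hpos : (0 : ℝ) ≤ inner ℝ (G z) d) :
    ∀ t : ℝ, 0 ≤ t → t ≤ min tbar (2 * lam / M) →
      g z - g (z - t • d) ≥ (t / 2) * inner ℝ (G z) d :=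
  stmt10_general s g G U hU hGrad M hM hLip lam hlam z d tbar hseg hd
end
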